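/- Vertical dueling correctness: let P and Q be 1D strings (of names) of lengths m_P and m_Q, with candidate occurrences in a text column at rows r_P < r_Q where r_Q - r_P < m_P (so the placements overlap). Let h = LCP(P[r_Q - r_P ..], Q) be the length of the longest common prefix of the suffix of P starting at offset r_Q - r_P and Q. If h < min(m_P - (r_Q - r_P), m_Q), then at most one of the two candidates can be an actual occurrence in the text; if both were occurrences, then the text row at position r_Q + h would have to equal both P[r_Q - r_P + h] and Q[h], which differ. -/

import Mathlib

/-- The string `P` of length `mP` occurs at row `r` of the text column `T`. -/
def OccursAt {α : Type*} (P : ℕ → α) (mP : ℕ) (T : ℕ → α) (r : ℕ) : Prop :=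
  ∀ i < mP, T (r + i) = P i

theorem OccursAt.apply_sub_add_eq {α : Type*} {P Q T : ℕ → α} {mP mQ rP rQ i : ℕ}
    (hP : OccursAt P mP T rP) (hQ : OccursAt Q mQ T rQ) (hle : rP ≤ rQ)
    (hiP : rQ - rP + i < mP) (hiQ : i < mQ) :
    P (rQ - rP + i) = Q i :=
  calc P (rQ - rP + i) = T (rP + (rQ - rP + i)) := (hP _ hiP).symm
    _ = T (rQ + i) := by rw [← Nat.add_assoc, Nat.add_sub_cancel' hle]
    _ = Q i := hQ _ hiQ

theorem vertical_duel_correct_general {α : Type*} (P Q T : ℕ → α) (mP mQ rP rQ h : ℕ)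
    (hr : rP < rQ)
    (hlt : h < min (mP - (rQ - rP)) mQ)
    (hmis : P (rQ - rP + h) ≠ Q h) :
    ¬ (OccursAt P mP T rP ∧ OccursAt Q mQ T rQ) := by
  rintro ⟨hP, hQ⟩
  exact hmis (hP.apply_sub_add_eq hQ hr.le (by omega) (lt_of_lt_of_le hlt (min_le_right _ _)))

/-- Vertical dueling correctness: if the candidates of `P` at row `rP` and of
`Q` at row `rQ > rP` overlap (`rQ - rP < mP`) and the longest common prefix
`h` of `P[rQ-rP ..]` and `Q` is shorter than the overlap, then at most one of
the two candidates can be an actual occurrence. -/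
theorem vertical_duel_correct {α : Type*} (P Q T : ℕ → α) (mP mQ rP rQ h : ℕ)
    (hr : rP < rQ) (hov : rQ - rP < mP)
    (hlcp : ∀ i < h, P (rQ - rP + i) = Q i)
    (hlt : h < min (mP - (rQ - rP)) mQ)
    (hmis : P (rQ - rP + h) ≠ Q h) :
    ¬ (OccursAt P mP T rP ∧ OccursAt Q mQ T rQ) :=
  vertical_duel_correct_general P Q T mP mQ rP rQ h hr hlt hmis
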